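/- arXiv:1210.6509 — 9 statements merged into one kernel-verified Lean document; each statement's English description precedes it below -/
import Mathlib

section
/- Let p be a prime and A, B nonempty subsets of Z/pZ. Then |A ∔ B| ≥ min{p, |A|+|B|-3}, where A ∔ B = {a+b : a ∈ A, b ∈ B, a ≠ b}. -/
/-!
Alon–Nathanson–Ruzsa: suppose `|B| < |A|` and `A ∔ B` lies in a set `C` with
`|C| = |A| + |B| - 3 < p`. Then `(x - y) ∏_{c ∈ C} (x + y - c)` vanishes on `A × B`.
Its top-degree part is `(x - y) (x + y)^|C|`, whose coefficient at `x^(|A|-1) y^(|B|-1)`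
is the ballot number `C(n, a) - C(n, a + 1)` (`n = |C|`, `a = |A| - 2`), nonzero mod `p`;
the Combinatorial Nullstellensatz then yields a point of `A × B` where the polynomial does
not vanish. This gives `|A ∔ B| ≥ min(p, |A| + |B| - 2)` when `|A| ≠ |B|`, and deleting
one element of `B` handles `|A| = |B|`.
-/

open Finset

/-- The restricted sumset `{a + b : a ∈ A, b ∈ B, a ≠ b}`. -/
def restrictedSumset {α : Type*} [AddCommMonoid α] [DecidableEq α]
    (A B : Finset α) : Finset α :=
  ((A ×ˢ B).filter fun x => x.1 ≠ x.2).image fun x => x.1 + x.2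

open MvPolynomial

section RestrictedSumset
variable {α : Type*} [DecidableEq α]

theorem restrictedSumset_comm [AddCommMonoid α] (A B : Finset α) :
    restrictedSumset A B = restrictedSumset B A := by
  ext z
  simp only [restrictedSumset, mem_image, mem_filter, mem_product, Prod.exists]
  constructor <;>
  · rintro ⟨x, y, ⟨⟨hx, hy⟩, hne⟩, rfl⟩
    exact ⟨y, x, ⟨⟨hy, hx⟩, hne.symm⟩, add_comm y x⟩

theorem restrictedSumset_subset_restrictedSumset_right [AddCommMonoid α] {A B B' : Finset α}
    (h : B' ⊆ B) : restrictedSumset A B' ⊆ restrictedSumset A B :=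
  image_subset_image (filter_subset_filter _ (product_subset_product subset_rfl h))

theorem sub_mul_prod_add_sub_eq_zero [CommRing α] {A B C : Finset α}
    (hC : restrictedSumset A B ⊆ C) {x y : α} (hx : x ∈ A) (hy : y ∈ B) :
    (x - y) * ∏ c ∈ C, (x + y - c) = 0 := by
  rcases eq_or_ne x y with rfl | hxy
  · rw [sub_self, zero_mul]
  · have hmem : x + y ∈ C :=
      hC (mem_image.mpr ⟨(x, y), mem_filter.mpr ⟨mem_product.mpr ⟨hx, hy⟩, hxy⟩, rfl⟩)
    rw [prod_eq_zero hmem (sub_self _), mul_zero]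

end RestrictedSumset

namespace MvPolynomial
variable {R σ : Type*} [CommRing R]

theorem coeff_X_add_X_pow [DecidableEq σ] {i j : σ} (hij : i ≠ j) (k l : ℕ) :
    coeff (Finsupp.single i k + Finsupp.single j l) ((X i + X j : MvPolynomial σ R) ^ (k + l)) =
      (k + l).choose k := by
  have hterm : ∀ m, (X i ^ m * X j ^ (k + l - m) * ((k + l).choose m : MvPolynomial σ R)) =
      monomial (Finsupp.single i m + Finsupp.single j (k + l - m)) ((k + l).choose m : R) := by
    intro m
    rw [X_pow_eq_monomial, X_pow_eq_monomial, monomial_mul, ← map_natCast (C : R →+* _),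
      mul_comm, C_mul_monomial, mul_one, mul_one]
  simp only [add_pow, coeff_sum, hterm, coeff_monomial]
  rw [sum_eq_single k (fun m _ hm => if_neg fun h => hm ?_) (by simp), if_pos (by simp)]
  simpa [Finsupp.single_apply, hij.symm] using congrArg (· i) h

theorem coeff_X_sub_X_mul_X_add_X_pow [DecidableEq σ] {i j : σ} (hij : i ≠ j) (a b : ℕ) :
    coeff (Finsupp.single i (a + 1) + Finsupp.single j b)
        ((X i - X j : MvPolynomial σ R) * (X i + X j) ^ (a + b)) =
      ((a + b).choose a : R) - (a + b).choose (a + 1) := by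
  have hi : Finsupp.single i (a + 1) + Finsupp.single j b =
      Finsupp.single i 1 + (Finsupp.single i a + Finsupp.single j b) := by
    rw [← add_assoc, ← Finsupp.single_add, add_comm 1 a]
  rw [sub_mul, coeff_sub, hi, coeff_X_mul, coeff_X_add_X_pow hij, ← hi]
  congr 1
  cases b with
  | zero =>
    rw [coeff_X_mul', if_neg (by simp [hij]), add_zero, Nat.choose_succ_self, Nat.cast_zero]
  | succ c =>
    have hj : Finsupp.single i (a + 1) + Finsupp.single j (c + 1) =
        Finsupp.single j 1 + (Finsupp.single i (a + 1) + Finsupp.single j c) := by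
      rw [add_left_comm, ← Finsupp.single_add, add_comm 1 c]
    rw [hj, coeff_X_mul, show a + (c + 1) = a + 1 + c by omega, coeff_X_add_X_pow hij]

theorem totalDegree_prod_sub_C_le {L : MvPolynomial σ R} (hL : L.totalDegree ≤ 1)
    (s : Finset R) :
    (∏ c ∈ s, (L - C c)).totalDegree ≤ #s := by
  simpa using (totalDegree_finsetProd s (L - C ·)).trans
    (sum_le_sum fun c _ => (totalDegree_sub_C_le L c).trans hL)

theorem totalDegree_mul_prod_sub_C_sub_mul_pow_le {Q L : MvPolynomial σ R}
    (hQ : Q.totalDegree ≤ 1) (hL : L.totalDegree ≤ 1) (s : Finset R) :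
    (Q * ∏ c ∈ s, (L - C c) - Q * L ^ #s).totalDegree ≤ #s := by
  classical
  induction s using Finset.induction_on with
  | empty => simp
  | insert c s hc ih =>
    have hprod := (totalDegree_mul Q _).trans (add_le_add hQ (totalDegree_prod_sub_C_le hL s))
    have hsplit : Q * ∏ x ∈ insert c s, (L - C x) - Q * L ^ #(insert c s) =
        L * (Q * ∏ x ∈ s, (L - C x) - Q * L ^ #s) - C c * (Q * ∏ x ∈ s, (L - C x)) := by
      rw [prod_insert hc, card_insert_of_notMem hc]; ring
    rw [hsplit, card_insert_of_notMem hc]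
    refine (totalDegree_sub _ _).trans (max_le ?_ ?_)
    · exact (totalDegree_mul _ _).trans (by omega)
    · exact (totalDegree_mul _ _).trans (by rw [totalDegree_C]; omega)

theorem coeff_mul_prod_sub_C {Q L : MvPolynomial σ R} (hQ : Q.totalDegree ≤ 1)
    (hL : L.totalDegree ≤ 1) (s : Finset R) {m : σ →₀ ℕ} (hm : #s < m.degree) :
    coeff m (Q * ∏ c ∈ s, (L - C c)) = coeff m (Q * L ^ #s) := by
  rw [← sub_eq_zero, ← coeff_sub]
  exact coeff_eq_zero_of_totalDegree_lt
    ((totalDegree_mul_prod_sub_C_sub_mul_pow_le hQ hL s).trans_lt hm)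

end MvPolynomial

theorem choose_sub_choose_succ_ne_zero {p a b : ℕ} [hp : Fact p.Prime] (hba : b ≤ a)
    (hab : a + b < p) (ha : a + 1 < p) :
    ((a + b).choose a : ZMod p) - (a + b).choose (a + 1) ≠ 0 := by
  have hnat : (a + b).choose (a + 1) * (a + 1) = (a + b).choose a * b := by
    rw [Nat.choose_succ_right_eq, Nat.add_sub_cancel_left]
  have key : ((a + 1 : ℕ) : ZMod p) * ((a + b).choose a - (a + b).choose (a + 1)) =
      (a + b).choose a * ((a + 1 - b : ℕ) : ZMod p) := by
    have := congrArg (Nat.cast : ℕ → ZMod p) hnat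
    push_cast [Nat.cast_sub (hba.trans a.le_succ)] at this ⊢
    linear_combination -this
  intro h
  rw [h, mul_zero, eq_comm, mul_eq_zero, ZMod.natCast_eq_zero_iff, ZMod.natCast_eq_zero_iff] at key
  rcases key with hdvd | hdvd
  · exact (hp.out.coprime_iff_not_dvd.mp (hp.out.coprime_choose_of_lt hab (by omega))) hdvd
  · exact absurd (Nat.le_of_dvd (by omega) hdvd) (by omega)

section ZModP
variable {p : ℕ} [Fact p.Prime]

theorem add_card_sub_two_le_card_restrictedSumset {A B : Finset (ZMod p)} (hBA : #B < #A)
    (hB : B.Nonempty) (hp : #A + #B ≤ p + 2) : #A + #B - 2 ≤ #(restrictedSumset A B) := by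
  by_contra! hlt
  have hAp : #A ≤ p := by simpa using card_le_univ A
  obtain ⟨a, ha⟩ : ∃ a, #A = a + 2 := ⟨#A - 2, by have := hB.card_pos; omega⟩
  obtain ⟨b, hb⟩ : ∃ b, #B = b + 1 := ⟨#B - 1, by have := hB.card_pos; omega⟩
  obtain ⟨C', hsub, hC'⟩ :=
    exists_superset_card_eq (s := restrictedSumset A B) (n := a + b) (by omega)
      (by rw [ZMod.card]; omega)
  set f : MvPolynomial (Fin 2) (ZMod p) := (X 0 - X 1) * ∏ c ∈ C', (X 0 + X 1 - C c) with hf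
  set t : Fin 2 →₀ ℕ := Finsupp.single 0 (a + 1) + Finsupp.single 1 b
  have hsum : (X 0 + X 1 : MvPolynomial (Fin 2) (ZMod p)).totalDegree ≤ 1 :=
    (totalDegree_add _ _).trans (by simp)
  have hdiff : (X 0 - X 1 : MvPolynomial (Fin 2) (ZMod p)).totalDegree ≤ 1 :=
    (totalDegree_sub _ _).trans (by simp)
  have ht : t.degree = a + b + 1 := by simp only [t, map_add, Finsupp.degree_single]; omega
  have hcoeff : coeff t f ≠ 0 := by
    rw [hf, coeff_mul_prod_sub_C hdiff hsum _ (by omega), hC',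
      coeff_X_sub_X_mul_X_add_X_pow (by decide)]
    exact choose_sub_choose_succ_ne_zero (by omega) (by omega) (by omega)
  have hdeg : f.totalDegree = t.degree := by
    refine le_antisymm ((totalDegree_mul _ _).trans ?_)
      (le_totalDegree (mem_support_iff.mpr hcoeff))
    have := add_le_add hdiff (totalDegree_prod_sub_C_le hsum C')
    omega
  obtain ⟨x, hx, hfx⟩ :=
    combinatorial_nullstellensatz_exists_eval_nonzero f t hcoeff hdeg ![A, B]
      (by intro i; fin_cases i <;> simp [t] <;> omega)
  apply hfx
  simpa [f] using sub_mul_prod_add_sub_eq_zero hsub (hx 0) (hx 1)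

theorem min_le_card_restrictedSumset_of_card_lt {A B : Finset (ZMod p)} (hBA : #B < #A)
    (hB : B.Nonempty) : min p (#A + #B - 2) ≤ #(restrictedSumset A B) := by
  by_cases hp : #A + #B ≤ p + 2
  · exact (min_le_right _ _).trans (add_card_sub_two_le_card_restrictedSumset hBA hB hp)
  have hAp : #A ≤ p := by simpa using card_le_univ A
  obtain ⟨B', hB'B, hB'⟩ := exists_subset_card_eq (s := B) (n := p + 2 - #A) (by omega)
  calc min p (#A + #B - 2) ≤ p := min_le_left _ _
    _ = #A + #B' - 2 := by omega
    _ ≤ #(restrictedSumset A B') :=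
      add_card_sub_two_le_card_restrictedSumset (by omega) (card_pos.mp (by omega)) (by omega)
    _ ≤ #(restrictedSumset A B) :=
      card_le_card (restrictedSumset_subset_restrictedSumset_right hB'B)

theorem min_le_card_restrictedSumset_of_card_le {A B : Finset (ZMod p)} (hBA : #B ≤ #A)
    (hB : B.Nonempty) : min p (#A + #B - 3) ≤ #(restrictedSumset A B) := by
  rcases hBA.lt_or_eq with hBA | hBA
  · exact (min_le_min_left p (by omega)).trans (min_le_card_restrictedSumset_of_card_lt hBA hB)
  by_cases hB1 : #B = 1
  · simp [show #A + #B - 3 = 0 by omega]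
  obtain ⟨b, hb⟩ := hB
  have hB' : #(B.erase b) = #B - 1 := card_erase_of_mem hb
  have hBpos : 0 < #B := card_pos.mpr ⟨b, hb⟩
  have hB'A : #(B.erase b) < #A := by omega
  have hB'ne : (B.erase b).Nonempty := card_pos.mp (by omega)
  calc min p (#A + #B - 3) = min p (#A + #(B.erase b) - 2) := by rw [hB']; congr 1; omega
    _ ≤ #(restrictedSumset A (B.erase b)) := min_le_card_restrictedSumset_of_card_lt hB'A hB'ne
    _ ≤ #(restrictedSumset A B) :=
      card_le_card (restrictedSumset_subset_restrictedSumset_right (erase_subset b B))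

end ZModP

theorem erdos_heilbronn (p : ℕ) (hp : p.Prime) (A B : Finset (ZMod p))
    (hA : A.Nonempty) (hB : B.Nonempty) :
    min p (A.card + B.card - 3) ≤ (restrictedSumset A B).card := by
  have : Fact p.Prime := ⟨hp⟩
  rcases le_total #B #A with hBA | hAB
  · exact min_le_card_restrictedSumset_of_card_le hBA hB
  · rw [restrictedSumset_comm, add_comm]
    exact min_le_card_restrictedSumset_of_card_le hAB hA
end

section
/- Let p be a prime and A a nonempty subset of Z/pZ. Then |A ∔ A| ≥ min{p, 2|A|-3}, where A ∔ A = {a+a' : a, a' ∈ A, a ≠ a'}. -/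
open Finset

open Polynomial

section EHaux

variable {F : Type*} [Field F] [DecidableEq F]

lemma coeff_basis (S : Finset F) (a : F) (ha : a ∈ S) (t : ℕ) (ht : S.card = t + 1) :
    (Lagrange.basis S id a).coeff t = Lagrange.nodalWeight S id a := by
  classical
  have hb := Lagrange.basis_eq_prod_sub_inv_mul_nodal_div (v := id) (i := a) ha
  rw [← Lagrange.nodal_erase_eq_nodal_div ha] at hb
  rw [hb, coeff_C_mul]
  have hmon : (Lagrange.nodal (S.erase a) id).Monic := Lagrange.nodal_monic
  have hdeg : (Lagrange.nodal (S.erase a) id).natDegree = t := by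
    rw [Lagrange.natDegree_nodal, card_erase_of_mem ha, ht]
    omega
  rw [← hdeg, hmon.coeff_natDegree, mul_one]

lemma L1 (S : Finset F) (t i : ℕ) (ht : S.card = t + 1) (hi : i ≤ t) :
    ∑ a ∈ S, a ^ i * Lagrange.nodalWeight S id a = if i = t then 1 else 0 := by
  classical
  have hinj : Set.InjOn id (S : Set F) := Function.injective_id.injOn
  have hdeg : (X ^ i : F[X]).degree < S.card := by
    rw [degree_X_pow, ht]
    exact_mod_cast Nat.lt_succ_of_le hi
  have h := Lagrange.eq_interpolate_of_eval_eq (r := fun a => a ^ i) hinj hdeg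
    (fun a _ => by simp)
  have h2 := congrArg (fun q => Polynomial.coeff q t) h
  simp only [Lagrange.interpolate_apply, finset_sum_coeff, coeff_C_mul, coeff_X_pow] at h2
  rw [eq_comm]
  rw [show (if t = i then (1:F) else 0) = if i = t then 1 else 0 by simp [eq_comm]] at h2
  rw [h2]
  apply sum_congr rfl
  intro a ha
  rw [coeff_basis S a ha t ht]

lemma factor_sum (S1 S2 : Finset F) (c : F) (x y x' y' : F → F) :
    ∑ a ∈ S1, ∑ b ∈ S2, c * (x a * y b - x' a * y' b)
      = c * ((∑ a ∈ S1, x a) * (∑ b ∈ S2, y b) - (∑ a ∈ S1, x' a) * (∑ b ∈ S2, y' b)) := by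
  rw [Finset.sum_mul_sum, Finset.sum_mul_sum, mul_sub, Finset.mul_sum, Finset.mul_sum,
    ← Finset.sum_sub_distrib]
  refine sum_congr rfl fun a _ => ?_
  rw [Finset.mul_sum, Finset.mul_sum, ← Finset.sum_sub_distrib]
  refine sum_congr rfl fun b _ => ?_
  ring

lemma EHkey (S1 S2 : Finset F) (n : ℕ) (hn : 1 ≤ n) (h1 : S1.card = n + 2)
    (h2 : S2.card = n + 1) (Q : F[X]) (hQ : Q.Monic) (hdeg : Q.natDegree = 2 * n)
    (hvan : ∀ a ∈ S1, ∀ b ∈ S2, a ≠ b → Q.eval (a + b) = 0) :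
    ((2 * n).choose n : F) = ((2 * n).choose (n + 1) : F) := by
  classical
  set w1 : F → F := Lagrange.nodalWeight S1 id with hw1
  set w2 : F → F := Lagrange.nodalWeight S2 id with hw2
  set P1 : ℕ → F := fun e => ∑ a ∈ S1, a ^ e * w1 a with hP1def
  set P2 : ℕ → F := fun e => ∑ b ∈ S2, b ^ e * w2 b with hP2def
  have hP1 : ∀ e ≤ n + 1, P1 e = if e = n + 1 then 1 else 0 := fun e he =>
    L1 S1 (n + 1) e h1 he
  have hP2 : ∀ e ≤ n, P2 e = if e = n then 1 else 0 := fun e he =>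
    L1 S2 n e h2 he
  set T : F := ∑ a ∈ S1, ∑ b ∈ S2, (a - b) * Q.eval (a + b) * (w1 a * w2 b) with hTdef
  have hT0 : T = 0 := by
    apply sum_eq_zero
    intro a ha
    apply sum_eq_zero
    intro b hb
    by_cases hab : a = b
    · rw [hab, sub_self, zero_mul, zero_mul]
    · rw [hvan a ha b hb hab, mul_zero, zero_mul]
  -- pointwise expansion
  have hpt : ∀ a b : F, (a - b) * Q.eval (a + b) * (w1 a * w2 b)
      = ∑ j ∈ range (2 * n + 1), ∑ i ∈ range (j + 1),
          Q.coeff j * (j.choose i : F) *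
            ((a ^ (i + 1) * w1 a) * (b ^ (j - i) * w2 b)
              - (a ^ i * w1 a) * (b ^ (j - i + 1) * w2 b)) := by
    intro a b
    have he := Polynomial.eval_eq_sum_range (p := Q) (a + b)
    rw [hdeg] at he
    rw [he]
    simp only [add_pow, Finset.mul_sum, Finset.sum_mul]
    refine sum_congr rfl fun j hj => ?_
    refine sum_congr rfl fun i hi => ?_
    ring
  have hswap : T = ∑ j ∈ range (2 * n + 1), ∑ i ∈ range (j + 1),
      Q.coeff j * (j.choose i : F) *
        (P1 (i + 1) * P2 (j - i) - P1 i * P2 (j - i + 1)) := by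
    rw [hTdef]
    rw [sum_congr rfl fun a _ => sum_congr rfl fun b _ => hpt a b]
    rw [sum_congr rfl fun a (_ : a ∈ S1) => Finset.sum_comm (s := S2)]
    rw [Finset.sum_comm (s := S1)]
    refine sum_congr rfl fun j hj => ?_
    rw [sum_congr rfl fun a (_ : a ∈ S1) => Finset.sum_comm (s := S2) (t := range (j + 1))]
    rw [Finset.sum_comm (s := S1) (t := range (j + 1))]
    refine sum_congr rfl fun i hi => ?_
    exact factor_sum S1 S2 _ _ _ _ _
  have hA : ∀ j ∈ range (2 * n + 1), ∀ i ∈ range (j + 1),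
      P1 (i + 1) * P2 (j - i) = if j = 2 * n ∧ i = n then 1 else 0 := by
    intro j hj i hi
    rw [mem_range] at hj hi
    by_cases hieq : i = n
    · rw [hP1 (i + 1) (by omega), if_pos (by omega), one_mul, hP2 (j - i) (by omega)]
      by_cases hjeq : j = 2 * n
      · rw [if_pos (by omega), if_pos ⟨hjeq, hieq⟩]
      · rw [if_neg (by omega), if_neg (by tauto)]
    · rw [if_neg (by tauto)]
      by_cases hin : i ≤ n
      · rw [hP1 (i + 1) (by omega), if_neg (by omega), zero_mul]
      · rw [hP2 (j - i) (by omega), if_neg (by omega), mul_zero]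
  have hB : ∀ j ∈ range (2 * n + 1), ∀ i ∈ range (j + 1),
      P1 i * P2 (j - i + 1) = if j = 2 * n ∧ i = n + 1 then 1 else 0 := by
    intro j hj i hi
    rw [mem_range] at hj hi
    by_cases hieq : i = n + 1
    · rw [hP1 i (by omega), if_pos (by omega), one_mul, hP2 (j - i + 1) (by omega)]
      by_cases hjeq : j = 2 * n
      · rw [if_pos (by omega), if_pos ⟨hjeq, hieq⟩]
      · rw [if_neg (by omega), if_neg (by tauto)]
    · rw [if_neg (by tauto)]
      by_cases hin : i ≤ n + 1
      · rw [hP1 i hin, if_neg hieq, zero_mul]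
      · rw [hP2 (j - i + 1) (by omega), if_neg (by omega), mul_zero]
  have hfin : T = ((2 * n).choose n : F) - ((2 * n).choose (n + 1) : F) := by
    rw [hswap]
    rw [sum_congr rfl fun j hj => sum_congr rfl fun i hi => by
      rw [hA j hj i hi, hB j hj i hi]]
    have hcoef : Q.coeff (2 * n) = 1 := by
      have := hQ.coeff_natDegree
      rwa [hdeg] at this
    rw [Finset.sum_eq_single_of_mem (2 * n) (by simp)]
    · simp only [hcoef, one_mul, true_and, mul_ite, mul_one, mul_zero, mul_sub,
        Finset.sum_sub_distrib, Finset.sum_ite_eq' (range (2 * n + 1))]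
      rw [if_pos (mem_range.mpr (by omega)), if_pos (mem_range.mpr (by omega))]
    · intro j hj hjne
      apply sum_eq_zero
      intro i hi
      rw [if_neg (by tauto), if_neg (by tauto), sub_zero, mul_zero]
  rw [← sub_eq_zero, ← hfin, hT0]
end EHaux

lemma EHchoose_ne (p n : ℕ) (hp : p.Prime) (h : 2 * n < p) :
    ((2 * n).choose n : ZMod p) ≠ ((2 * n).choose (n + 1) : ZMod p) := by
  haveI : Fact p.Prime := ⟨hp⟩
  intro hEq
  have hfac : ((2 * n).factorial : ZMod p) ≠ 0 := by
    rw [Ne, ZMod.natCast_eq_zero_iff]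
    intro hd
    have := (Nat.Prime.dvd_factorial hp).mp hd
    omega
  have hX : ((2 * n).choose n : ZMod p) ≠ 0 := by
    intro h0
    apply hfac
    have hid := Nat.choose_mul_factorial_mul_factorial (show n ≤ 2 * n by omega)
    rw [show 2 * n - n = n by omega] at hid
    calc ((2 * n).factorial : ZMod p)
        = (((2 * n).choose n : ℕ) : ZMod p) * (n.factorial : ZMod p) * (n.factorial : ZMod p) := by
          rw_mod_cast [hid]
      _ = 0 := by rw [h0, zero_mul, zero_mul]
  have hid2 : (2 * n).choose (n + 1) * (n + 1) = (2 * n).choose n * n := by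
    have := Nat.choose_succ_right_eq (2 * n) n
    rwa [show 2 * n - n = n by omega] at this
  have hc : ((2 * n).choose n : ZMod p) * ((n : ZMod p) + 1) = ((2 * n).choose n : ZMod p) * (n : ZMod p) := by
    have := congrArg (fun m : ℕ => (m : ZMod p)) hid2
    push_cast at this
    rw [← hEq] at this
    exact this
  apply hX
  linear_combination hc


lemma mem_rs {α : Type*} [AddCommMonoid α] [DecidableEq α] {A : Finset α} {a b : α}
    (ha : a ∈ A) (hb : b ∈ A) (hne : a ≠ b) : a + b ∈ restrictedSumset A A :=
  mem_image.mpr ⟨(a, b), mem_filter.mpr ⟨mem_product.mpr ⟨ha, hb⟩, hne⟩, rfl⟩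

lemma rs_mono {α : Type*} [AddCommMonoid α] [DecidableEq α] {A B : Finset α} (h : A ⊆ B) :
    restrictedSumset A A ⊆ restrictedSumset B B :=
  image_subset_image (filter_subset_filter _ (product_subset_product h h))

lemma main (p : ℕ) (hp : p.Prime) (A : Finset (ZMod p)) (hk : 3 ≤ A.card)
    (hkp : 2 * A.card - 3 ≤ p) : 2 * A.card - 3 ≤ (restrictedSumset A A).card := by
  haveI : Fact p.Prime := ⟨hp⟩
  by_contra hcon
  push_neg at hcon
  set n := A.card - 2 with hn
  have hn1 : 1 ≤ n := by omega
  have hcard : (restrictedSumset A A).card ≤ 2 * n := by omega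
  have h2n : 2 * n < p := by omega
  obtain ⟨C, hsub, -, hC⟩ := exists_subsuperset_card_eq (restrictedSumset A A).subset_univ
    hcard (by rw [Finset.card_univ, ZMod.card]; omega)
  obtain ⟨a0, ha0⟩ := Finset.card_pos.mp (show 0 < A.card by omega)
  refine EHchoose_ne p n hp h2n (EHkey A (A.erase a0) n hn1 (by omega)
    (by rw [card_erase_of_mem ha0]; omega)
    (Lagrange.nodal C id) Lagrange.nodal_monic (by rw [Lagrange.natDegree_nodal, hC]) ?_)
  intro a ha b hb hne
  have hmem : a + b ∈ C := hsub (mem_rs ha (mem_of_mem_erase hb) hne)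
  exact Lagrange.eval_nodal_at_node (v := (id : ZMod p → ZMod p)) hmem

theorem dias_da_silva_hamidoune (p : ℕ) (hp : p.Prime) (A : Finset (ZMod p))
    (hA : A.Nonempty) :
    min p (2 * A.card - 3) ≤ (restrictedSumset A A).card := by
  haveI : Fact p.Prime := ⟨hp⟩
  rcases lt_or_ge A.card 3 with h3 | h3
  · have h12 : A.card = 1 ∨ A.card = 2 := by
      have := Finset.card_pos.mpr hA
      omega
    rcases h12 with h | h
    · rw [h]
      simp
    · obtain ⟨a, b, hab, hA2⟩ := Finset.card_eq_two.mp h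
      have hmem : a + b ∈ restrictedSumset A A :=
        mem_rs (by simp [hA2]) (by simp [hA2]) hab
      have h1 : 1 ≤ (restrictedSumset A A).card := Finset.card_pos.mpr ⟨_, hmem⟩
      rw [h]
      exact le_trans (min_le_right _ _) (by omega)
  · rcases le_or_gt (2 * A.card - 3) p with hle | hlt
    · exact le_trans (min_le_right _ _) (main p hp A h3 hle)
    · have hp2 : p ≠ 2 := by
        intro h2
        subst h2
        have := Finset.card_le_univ A
        rw [ZMod.card] at this
        omega
      have hge := hp.two_le
      obtain ⟨t, ht⟩ := hp.odd_of_ne_two hp2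
      have hm : (p + 3) / 2 = t + 2 := by omega
      obtain ⟨A', hsub', hA'⟩ := Finset.exists_subset_card_eq
        (show (p + 3) / 2 ≤ A.card by omega)
      have hmain := main p hp A' (by rw [hA', hm]; omega) (by rw [hA', hm]; omega)
      rw [hA', hm] at hmain
      have hpval : 2 * (t + 2) - 3 = p := by omega
      rw [hpval] at hmain
      calc min p (2 * A.card - 3) ≤ p := min_le_left _ _
        _ ≤ (restrictedSumset A' A').card := hmain
        _ ≤ (restrictedSumset A A).card := Finset.card_le_card (rs_mono hsub')
end

section
/- Let m be a positive integer and A, B nonempty subsets of Z/mZ such that 0 ∈ B and every nonzero element of B is relatively prime to m. Then |A+B| ≥ min{m, |A|+|B|-1}. -/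
open Finset Pointwise

lemma chowla_aux {m : ℕ} (hm : 0 < m) {b : ZMod m} (hb : b ≠ 0)
    (hcop : Nat.Coprime (ZMod.val b) m) {A : Finset (ZMod m)} (hA : A.Nonempty)
    (hstep : ∀ a ∈ A, a + b ∈ A) : ∀ y, y ∈ A := by
  haveI : NeZero m := ⟨hm.ne'⟩
  obtain ⟨a₀, ha₀⟩ := hA
  have hk : ∀ k : ℕ, a₀ + k • b ∈ A := by
    intro k
    induction k with
    | zero => simpa using ha₀
    | succ n ih =>
      rw [succ_nsmul, ← add_assoc]
      exact hstep _ ih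
  have hunit : IsUnit b := by
    have := (ZMod.isUnit_iff_coprime (ZMod.val b) m).2 hcop
    rwa [ZMod.natCast_val, ZMod.cast_id] at this
  obtain ⟨u, hu⟩ := hunit
  intro y
  set c : ZMod m := (↑u⁻¹ : ZMod m) * (y - a₀) with hc
  have hcb : c * b = y - a₀ := by
    rw [hc, ← hu, mul_comm, ← mul_assoc, Units.mul_inv, one_mul]
  have : y = a₀ + (ZMod.val c) • b := by
    rw [nsmul_eq_mul, ZMod.natCast_val, ZMod.cast_id, hcb]
    ring
  rw [this]
  exact hk _

theorem chowla (m : ℕ) (hm : 0 < m) (A B : Finset (ZMod m))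
    (hA : A.Nonempty) (hB : B.Nonempty)
    (h0 : (0 : ZMod m) ∈ B)
    (hcop : ∀ b ∈ B, b ≠ 0 → Nat.Coprime (ZMod.val b) m) :
    min m (A.card + B.card - 1) ≤ (A + B).card := by
  have key : ∀ n (A B : Finset (ZMod m)), B.card = n → A.Nonempty →
      (0 : ZMod m) ∈ B → (∀ b ∈ B, b ≠ 0 → Nat.Coprime (ZMod.val b) m) →
      min m (A.card + B.card - 1) ≤ (A + B).card := by
    intro n
    induction n using Nat.strong_induction_on with
    | _ n ih =>
      intro A B hn hA h0 hcop
      by_cases hall : ∀ a ∈ A, ∀ b ∈ B, a + b ∈ A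
      · -- A + B ⊆ A
        by_cases hBsub : B ⊆ {0}
        · -- B = {0}
          have hB0 : B = {0} := Finset.Subset.antisymm hBsub (Finset.singleton_subset_iff.2 h0)
          have : A + B = A := by
            rw [hB0, Finset.add_singleton]
            simp
          rw [this, hB0]
          simp only [Finset.card_singleton]
          omega
        · obtain ⟨b, hbB, hb0⟩ : ∃ b ∈ B, b ≠ 0 := by
            by_contra h
            push_neg at h
            exact hBsub fun x hx => Finset.mem_singleton.2 (h x hx)
          haveI : NeZero m := ⟨hm.ne'⟩
          have hAuniv : A = Finset.univ := Finset.eq_univ_of_forall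
            (chowla_aux hm hb0 (hcop b hbB hb0) hA (fun a ha => hall a ha b hbB))
          have hsub : A ⊆ A + B := fun a ha => by
            rw [Finset.mem_add]
            exact ⟨a, ha, 0, h0, by simp⟩
          calc min m (A.card + B.card - 1) ≤ m := min_le_left _ _
            _ = A.card := by rw [hAuniv]; simp [ZMod.card m]
            _ ≤ (A + B).card := Finset.card_le_card hsub
      · push_neg at hall
        obtain ⟨a, ha, b, hb, hab⟩ := hall
        set B₁ := B.filter (fun x => a + x ∈ A) with hB₁
        set A₁ := A ∪ (B \ B₁).image (a + ·) with hA₁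
        have hbB₁ : b ∉ B₁ := by
          simp [hB₁, hab]
        have h0B₁ : (0 : ZMod m) ∈ B₁ := by
          simp [hB₁, h0, ha]
        have hB₁sub : B₁ ⊆ B := Finset.filter_subset _ _
        have hcard₁ : B₁.card < B.card :=
          Finset.card_lt_card ⟨hB₁sub, fun h => hbB₁ (h hb)⟩
        -- sumset inclusion
        have hsum : A₁ + B₁ ⊆ A + B := by
          intro x hx
          rw [Finset.mem_add] at hx
          obtain ⟨y, hy, z, hz, rfl⟩ := hx
          rw [hA₁, Finset.mem_union] at hy
          rcases hy with hy | hy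
          · exact Finset.add_mem_add hy (hB₁sub hz)
          · rw [Finset.mem_image] at hy
            obtain ⟨w, hw, rfl⟩ := hy
            rw [Finset.mem_sdiff] at hw
            have haz : a + z ∈ A := (Finset.mem_filter.1 hz).2
            have : a + w + z = (a + z) + w := by ring
            rw [this]
            exact Finset.add_mem_add haz hw.1
        -- cards
        have hdisj : Disjoint A ((B \ B₁).image (a + ·)) := by
          rw [Finset.disjoint_right]
          intro x hx hxA
          rw [Finset.mem_image] at hx
          obtain ⟨w, hw, rfl⟩ := hx
          rw [Finset.mem_sdiff, hB₁, Finset.mem_filter] at hw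
          exact hw.2 ⟨hw.1, hxA⟩
        have hcardA₁ : A₁.card = A.card + (B \ B₁).card := by
          rw [hA₁, Finset.card_union_of_disjoint hdisj,
            Finset.card_image_of_injective _ (add_right_injective a)]
        have hcardsum : A₁.card + B₁.card = A.card + B.card := by
          rw [hcardA₁, add_assoc, Finset.card_sdiff_add_card_eq_card hB₁sub]
        have hA₁ne : A₁.Nonempty := hA.mono Finset.subset_union_left
        have := ih B₁.card (hn ▸ hcard₁) A₁ B₁ rfl hA₁ne h0B₁
          (fun x hx hx0 => hcop x (hB₁sub hx) hx0)
        calc min m (A.card + B.card - 1) = min m (A₁.card + B₁.card - 1) := by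
              rw [hcardsum]
          _ ≤ (A₁ + B₁).card := this
          _ ≤ (A + B).card := Finset.card_le_card hsum
  exact key B.card A B rfl hA h0 hcop
end

section
/- Let G be a finite group (written multiplicatively) and p(G) the smallest prime dividing |G|. If A and B are nonempty subsets of G, then |AB| ≥ min{p(G), |A|+|B|-1}, where AB = {ab : a ∈ A, b ∈ B}. -/
open Finset Pointwise

theorem cauchy_davenport_finite_group {G : Type*} [Group G] [Fintype G] [DecidableEq G]
    (A B : Finset G) (hA : A.Nonempty) (hB : B.Nonempty) :
    min ((Fintype.card G).minFac) (A.card + B.card - 1) ≤ (A * B).card := by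
  have h := cauchy_davenport_minOrder_mul hA hB
  have hle : ((Fintype.card G).minFac : ℕ∞) ≤ Monoid.minOrder G := by
    rw [Monoid.le_minOrder]
    intro a ha _
    exact_mod_cast Nat.cast_le.2 <| Nat.minFac_le_of_dvd
      (by have := orderOf_pos a; have : orderOf a ≠ 1 := fun h1 => ha (orderOf_eq_one_iff.mp h1)
          omega) (orderOf_dvd_card)
  have h2 : ((min ((Fintype.card G).minFac) (A.card + B.card - 1) : ℕ) : ℕ∞) ≤
      ((A * B).card : ℕ∞) := by
    exact le_trans (min_le_min hle le_rfl) h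
  exact_mod_cast h2
end

section
/- Let n be a positive integer, G = Z/nZ, and let p(G) be the smallest prime dividing n. Let A, B ⊆ Z/nZ be arithmetic progressions with the same common difference, with |A| = k ≥ 3, |B| = l ≥ 3, and p(G) > k+l-3. If |A ∔ B| = |A|+|B|-3, then A = B, where A ∔ B = {a+b : a ∈ A, b ∈ B, a ≠ b}. -/
open Finset

theorem inverse_eh_zmod_n (n : ℕ) (hn : 0 < n) (A B : Finset (ZMod n))
    (k l : ℕ) (hk : 3 ≤ k) (hl : 3 ≤ l)
    (hAcard : A.card = k) (hBcard : B.card = l)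
    (a b d : ZMod n)
    (hA : A = (Finset.range k).image (fun s : ℕ => a + (s : ZMod n) * d))
    (hB : B = (Finset.range l).image (fun t : ℕ => b + (t : ZMod n) * d))
    (hp : k + l - 3 < n.minFac)
    (h : (restrictedSumset A B).card = A.card + B.card - 3) :
    A = B := by
  haveI : NeZero n := ⟨hn.ne'⟩
  -- injectivity on A, and d ≠ 0
  have hcardA : ((Finset.range k).image (fun s : ℕ => a + (s : ZMod n) * d)).card
      = (Finset.range k).card := by rw [← hA, hAcard, Finset.card_range]
  have hinjA := Finset.card_image_iff.mp hcardA
  have hd : d ≠ 0 := by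
    intro h0
    have h01 : (0 : ℕ) = 1 := hinjA (by simp; omega) (by simp; omega) (by simp [h0])
    omega
  -- key nonvanishing fact
  have hnz : ∀ u : ℕ, 1 ≤ u → u ≤ k + l - 3 → ((u : ZMod n)) * d ≠ 0 := by
    intro u hu1 hu2 h0
    have hsm : u • d = 0 := by rw [nsmul_eq_mul]; exact h0
    have hord : addOrderOf d ∣ u := addOrderOf_dvd_of_nsmul_eq_zero hsm
    have hordn : addOrderOf d ∣ n := by
      apply addOrderOf_dvd_of_nsmul_eq_zero
      rw [nsmul_eq_mul, ZMod.natCast_self, zero_mul]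
    have hle : addOrderOf d ≤ u := Nat.le_of_dvd (by omega) hord
    have hne0 : addOrderOf d ≠ 0 := by
      intro hz; rw [hz] at hord; omega
    have hne1 : addOrderOf d ≠ 1 := by
      intro h1; exact hd (AddMonoid.addOrderOf_eq_one_iff.mp h1)
    have := Nat.minFac_le_of_dvd (by omega) hordn
    omega
  -- membership in the restricted sumset
  have memS : ∀ s t : ℕ, s < k → t < l → a + (s : ZMod n) * d ≠ b + (t : ZMod n) * d →
      a + b + ((s + t : ℕ) : ZMod n) * d ∈ restrictedSumset A B := by
    intro s t hs ht hne
    simp only [restrictedSumset, Finset.mem_image, Finset.mem_filter, Finset.mem_product]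
    refine ⟨(a + (s : ZMod n) * d, b + (t : ZMod n) * d), ⟨⟨?_, ?_⟩, hne⟩, by push_cast; ring⟩
    · rw [hA]; exact Finset.mem_image_of_mem _ (Finset.mem_range.2 hs)
    · rw [hB]; exact Finset.mem_image_of_mem _ (Finset.mem_range.2 ht)
  -- all middle terms are in the restricted sumset
  have key : ∀ u : ℕ, 1 ≤ u → u ≤ k + l - 3 →
      a + b + (u : ZMod n) * d ∈ restrictedSumset A B := by
    intro u hu1 hu2
    set s := min u (k - 1) with hsdef
    have hs1 : 1 ≤ s := by omega
    have hsk : s ≤ k - 1 := by omega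
    have htl : u - s ≤ l - 2 := by omega
    by_cases hne : a + (s : ZMod n) * d ≠ b + ((u - s : ℕ) : ZMod n) * d
    · have := memS s (u - s) (by omega) (by omega) hne
      rwa [show s + (u - s) = u by omega] at this
    · push_neg at hne
      have hne2 : a + ((s - 1 : ℕ) : ZMod n) * d ≠ b + ((u - s + 1 : ℕ) : ZMod n) * d := by
        intro heq
        rw [Nat.cast_sub hs1, Nat.cast_one] at heq
        push_cast at heq
        have h2d : ((2 : ℕ) : ZMod n) * d = 0 := by push_cast; linear_combination hne - heq
        exact hnz 2 (by omega) (by omega) h2d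
      have := memS (s - 1) (u - s + 1) (by omega) (by omega) hne2
      rwa [show (s - 1) + (u - s + 1) = u by omega] at this
  -- the middle terms are pairwise distinct
  have hinjT : Set.InjOn (fun u : ℕ => a + b + (u : ZMod n) * d)
      (Finset.Icc 1 (k + l - 3)) := by
    intro u hu v hv huv
    simp only [Finset.coe_Icc, Set.mem_Icc] at hu hv
    simp only at huv
    by_contra hne
    rcases Nat.lt_or_ge u v with hlt | hge
    · have hz : ((v - u : ℕ) : ZMod n) * d = 0 := by
        rw [Nat.cast_sub hlt.le]; linear_combination -huv
      exact hnz (v - u) (by omega) (by omega) hz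
    · have hlt : v < u := by omega
      have hz : ((u - v : ℕ) : ZMod n) * d = 0 := by
        rw [Nat.cast_sub hlt.le]; linear_combination huv
      exact hnz (u - v) (by omega) (by omega) hz
  have hTsub : (Finset.Icc 1 (k + l - 3)).image (fun u : ℕ => a + b + (u : ZMod n) * d)
      ⊆ restrictedSumset A B := by
    intro x hx
    obtain ⟨u, hu, rfl⟩ := Finset.mem_image.1 hx
    rw [Finset.mem_Icc] at hu
    exact key u hu.1 hu.2
  have hTcard : ((Finset.Icc 1 (k + l - 3)).image
      (fun u : ℕ => a + b + (u : ZMod n) * d)).card = k + l - 3 := by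
    rw [Finset.card_image_of_injOn hinjT, Nat.card_Icc]; omega
  have hTeq : (Finset.Icc 1 (k + l - 3)).image (fun u : ℕ => a + b + (u : ZMod n) * d)
      = restrictedSumset A B :=
    Finset.eq_of_subset_of_card_le hTsub (by rw [h, hAcard, hBcard, hTcard])
  have hmem : ∀ x, x ∈ restrictedSumset A B →
      ∃ u : ℕ, 1 ≤ u ∧ u ≤ k + l - 3 ∧ x = a + b + (u : ZMod n) * d := by
    intro x hx
    rw [← hTeq] at hx
    obtain ⟨u, hu, rfl⟩ := Finset.mem_image.1 hx
    rw [Finset.mem_Icc] at hu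
    exact ⟨u, hu.1, hu.2, rfl⟩
  -- a = b
  have hab : a = b := by
    by_contra hne
    have h0 : a + b + ((0 + 0 : ℕ) : ZMod n) * d ∈ restrictedSumset A B :=
      memS 0 0 (by omega) (by omega) (by simpa using hne)
    obtain ⟨u, hu1, hu2, hx⟩ := hmem _ h0
    push_cast at hx
    have hz : (u : ZMod n) * d = 0 := by linear_combination -hx
    exact hnz u hu1 hu2 hz
  -- the top term is excluded: (k-1)d = (l-1)d
  have hend : a + ((k - 1 : ℕ) : ZMod n) * d = b + ((l - 1 : ℕ) : ZMod n) * d := by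
    by_contra hne
    have h0 := memS (k - 1) (l - 1) (by omega) (by omega) hne
    rw [show (k - 1) + (l - 1) = k + l - 2 by omega] at h0
    obtain ⟨u, hu1, hu2, hx⟩ := hmem _ h0
    have hz : ((k + l - 2 - u : ℕ) : ZMod n) * d = 0 := by
      rw [Nat.cast_sub (by omega : u ≤ k + l - 2)]; linear_combination hx
    exact hnz (k + l - 2 - u) (by omega) (by omega) hz
  rw [hab] at hend
  -- k = l
  have hkl : k = l := by
    by_contra hne
    rcases Nat.lt_or_ge k l with hlt | hge
    · have hz : ((l - 1 - (k - 1) : ℕ) : ZMod n) * d = 0 := by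
        rw [Nat.cast_sub (by omega : k - 1 ≤ l - 1)]; linear_combination -hend
      exact hnz (l - 1 - (k - 1)) (by omega) (by omega) hz
    · have hz : ((k - 1 - (l - 1) : ℕ) : ZMod n) * d = 0 := by
        rw [Nat.cast_sub (by omega : l - 1 ≤ k - 1)]; linear_combination hend
      exact hnz (k - 1 - (l - 1)) (by omega) (by omega) hz
  subst hab; subst hkl
  rw [hA, hB]
end

section
/- Let n be a positive integer whose smallest prime factor p satisfies p > k+l-3, and let A, B ⊆ Z/nZ be arithmetic progressions with the same common difference, with |A| = k ≥ 5 and |B| = l ≥ 5. Then |A ∔ B| = |A|+|B|-3 if and only if A = B, where A ∔ B = {a+b : a ∈ A, b ∈ B, a ≠ b}. -/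
open Finset

lemma mem_restrictedSumset {α : Type*} [AddCommMonoid α] [DecidableEq α]
    {A B : Finset α} {x : α} :
    x ∈ restrictedSumset A B ↔ ∃ u ∈ A, ∃ v ∈ B, u ≠ v ∧ u + v = x := by
  simp only [restrictedSumset, mem_image, mem_filter, mem_product, Prod.exists]
  constructor
  · rintro ⟨u, v, ⟨⟨hu, hv⟩, hne⟩, h⟩; exact ⟨u, hu, v, hv, hne, h⟩
  · rintro ⟨u, hu, v, hv, hne, h⟩; exact ⟨u, v, ⟨⟨hu, hv⟩, hne⟩, h⟩

/-- Key lemma: if `d ≠ 0` and `0 < c < minFac n`, then `c * d ≠ 0` in `ZMod n`. -/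
lemma key_ne (n : ℕ) (hn : 0 < n) (d : ZMod n) (hd : d ≠ 0) (c : ℕ)
    (hc : 0 < c) (hcn : c < n.minFac) : (c : ZMod n) * d ≠ 0 := by
  have : NeZero n := ⟨hn.ne'⟩
  intro h
  have hdvd : addOrderOf d ∣ c := by
    rw [addOrderOf_dvd_iff_nsmul_eq_zero, nsmul_eq_mul]
    exact h
  have h1 : addOrderOf d ≠ 1 := by simpa [AddMonoid.addOrderOf_eq_one_iff] using hd
  have h0 : 0 < addOrderOf d := addOrderOf_pos d
  have hdn : addOrderOf d ∣ n := by
    have := addOrderOf_dvd_card (x := d)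
    simpa [ZMod.card] using this
  have hmf : n.minFac ≤ addOrderOf d := Nat.minFac_le_of_dvd (by omega) hdn
  have hle : addOrderOf d ≤ c := Nat.le_of_dvd hc hdvd
  omega

/-- Every middle element `a + b + j*d`, `1 ≤ j ≤ k+l-3`, lies in the restricted sumset. -/
lemma mid_mem (n : ℕ) (k l : ℕ) (hk : 2 ≤ k) (hl : 2 ≤ l)
    (a b d : ZMod n) (h2d : (2 : ZMod n) * d ≠ 0)
    (j : ℕ) (hj1 : 1 ≤ j) (hj2 : j ≤ k + l - 3) :
    a + b + (j : ZMod n) * d ∈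
      restrictedSumset ((Finset.range k).image (fun s : ℕ => a + (s : ZMod n) * d))
        ((Finset.range l).image (fun t : ℕ => b + (t : ZMod n) * d)) := by
  set s0 := min j (k - 1) with hs0def
  have h1 : 1 ≤ s0 := by omega
  have h2 : s0 ≤ k - 1 := by omega
  have h3 : s0 ≤ j := by omega
  have h4 : j - s0 ≤ l - 2 := by omega
  rw [mem_restrictedSumset]
  by_cases hcase : a + (s0 : ZMod n) * d = b + ((j - s0 : ℕ) : ZMod n) * d
  · refine ⟨a + ((s0 - 1 : ℕ) : ZMod n) * d,
      mem_image.mpr ⟨s0 - 1, mem_range.mpr (by omega), rfl⟩,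
      b + ((j - s0 + 1 : ℕ) : ZMod n) * d,
      mem_image.mpr ⟨j - s0 + 1, mem_range.mpr (by omega), rfl⟩, ?_, ?_⟩
    · intro heq
      apply h2d
      have e1 : (s0 : ZMod n) = ((s0 - 1 : ℕ) : ZMod n) + 1 := by
        rw [← Nat.cast_one (R := ZMod n), ← Nat.cast_add]
        congr 1; omega
      have e2 : ((j - s0 + 1 : ℕ) : ZMod n) = ((j - s0 : ℕ) : ZMod n) + 1 := by
        push_cast; ring
      rw [e1] at hcase
      rw [e2] at heq
      linear_combination hcase - heq
    · have hsum : ((s0 - 1 : ℕ) : ZMod n) + ((j - s0 + 1 : ℕ) : ZMod n) = (j : ZMod n) := by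
        rw [← Nat.cast_add]; congr 1; omega
      linear_combination d * hsum
  · refine ⟨a + (s0 : ZMod n) * d,
      mem_image.mpr ⟨s0, mem_range.mpr (by omega), rfl⟩,
      b + ((j - s0 : ℕ) : ZMod n) * d,
      mem_image.mpr ⟨j - s0, mem_range.mpr (by omega), rfl⟩, hcase, ?_⟩
    have hsum : (s0 : ZMod n) + ((j - s0 : ℕ) : ZMod n) = (j : ZMod n) := by
      rw [← Nat.cast_add]; congr 1; omega
    linear_combination d * hsum

theorem inverse_eh_zmod_n_iff (n : ℕ) (hn : 0 < n) (A B : Finset (ZMod n))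
    (k l : ℕ) (hk : 5 ≤ k) (hl : 5 ≤ l)
    (hAcard : A.card = k) (hBcard : B.card = l)
    (a b d : ZMod n)
    (hA : A = (Finset.range k).image (fun s : ℕ => a + (s : ZMod n) * d))
    (hB : B = (Finset.range l).image (fun t : ℕ => b + (t : ZMod n) * d))
    (hp : k + l - 3 < n.minFac) :
    (restrictedSumset A B).card = A.card + B.card - 3 ↔ A = B := by
  -- d ≠ 0
  have hd : d ≠ 0 := by
    rintro rfl
    have hsub : A ⊆ {a} := by
      rw [hA]
      intro x hx
      simp only [mem_image, mem_range] at hx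
      obtain ⟨s, _, rfl⟩ := hx
      simp
    have := card_le_card hsub
    simp only [card_singleton, hAcard] at this
    omega
  have key : ∀ c : ℕ, 0 < c → c ≤ k + l - 3 → (c : ZMod n) * d ≠ 0 := fun c hc1 hc2 =>
    key_ne n hn d hd c hc1 (lt_of_le_of_lt hc2 hp)
  have h2d : (2 : ZMod n) * d ≠ 0 := by
    have := key 2 (by norm_num) (by omega)
    simpa using this
  -- injectivity of j ↦ x + j*d for j's within distance k+l-3
  have hinj : ∀ (x : ZMod n) (j1 j2 : ℕ), j1 < j2 → j2 - j1 ≤ k + l - 3 →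
      x + (j1 : ZMod n) * d ≠ x + (j2 : ZMod n) * d := by
    intro x j1 j2 hlt hle heq
    apply key (j2 - j1) (by omega) hle
    have e : ((j2 - j1 : ℕ) : ZMod n) = (j2 : ZMod n) - (j1 : ZMod n) := by
      rw [Nat.cast_sub hlt.le]
    rw [e]
    linear_combination -heq
  constructor
  · -- forward direction
    intro hcard
    rw [hAcard, hBcard] at hcard
    -- first: a = b
    have hab : a = b := by
      by_contra hab
      have hsub : (range (k + l - 2)).image (fun j : ℕ => a + b + (j : ZMod n) * d)
          ⊆ restrictedSumset A B := by
        intro x hx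
        simp only [mem_image, mem_range] at hx
        obtain ⟨j, hj, rfl⟩ := hx
        rcases Nat.eq_zero_or_pos j with h0 | h0
        · subst h0
          rw [mem_restrictedSumset]
          refine ⟨a + ((0 : ℕ) : ZMod n) * d,
            by rw [hA]; exact mem_image.mpr ⟨0, mem_range.mpr (by omega), rfl⟩,
            b + ((0 : ℕ) : ZMod n) * d,
            by rw [hB]; exact mem_image.mpr ⟨0, mem_range.mpr (by omega), rfl⟩,
            by simpa using hab, by push_cast; ring⟩
        · rw [hA, hB]
          exact mid_mem n k l (by omega) (by omega) a b d h2d j h0 (by omega)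
      have hc2 : ((range (k + l - 2)).image
          (fun j : ℕ => a + b + (j : ZMod n) * d)).card = k + l - 2 := by
        rw [card_image_of_injOn, card_range]
        intro j1 hj1 j2 hj2 heq
        simp only [coe_range, Set.mem_Iio] at hj1 hj2
        by_contra hne
        rcases Nat.lt_or_ge j1 j2 with h | h
        · exact hinj (a + b) j1 j2 h (by omega) heq
        · exact hinj (a + b) j2 j1 (by omega) (by omega) heq.symm
      have := card_le_card hsub
      rw [hc2, hcard] at this
      omega
    -- second: endpoints coincide
    have hend : a + ((k - 1 : ℕ) : ZMod n) * d = b + ((l - 1 : ℕ) : ZMod n) * d := by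
      by_contra hend
      have hsub : (Icc 1 (k + l - 2)).image (fun j : ℕ => a + b + (j : ZMod n) * d)
          ⊆ restrictedSumset A B := by
        intro x hx
        simp only [mem_image, mem_Icc] at hx
        obtain ⟨j, hj, rfl⟩ := hx
        rcases Nat.lt_or_ge j (k + l - 2) with h0 | h0
        · rw [hA, hB]
          exact mid_mem n k l (by omega) (by omega) a b d h2d j hj.1 (by omega)
        · have hje : j = k + l - 2 := by omega
          subst hje
          rw [mem_restrictedSumset]
          refine ⟨a + ((k - 1 : ℕ) : ZMod n) * d,
            by rw [hA]; exact mem_image.mpr ⟨k - 1, mem_range.mpr (by omega), rfl⟩,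
            b + ((l - 1 : ℕ) : ZMod n) * d,
            by rw [hB]; exact mem_image.mpr ⟨l - 1, mem_range.mpr (by omega), rfl⟩,
            hend, ?_⟩
          have hsum : ((k - 1 : ℕ) : ZMod n) + ((l - 1 : ℕ) : ZMod n)
              = ((k + l - 2 : ℕ) : ZMod n) := by
            rw [← Nat.cast_add]; congr 1; omega
          linear_combination d * hsum
      have hc2 : ((Icc 1 (k + l - 2)).image
          (fun j : ℕ => a + b + (j : ZMod n) * d)).card = k + l - 2 := by
        rw [card_image_of_injOn, Nat.card_Icc]
        · omega
        · intro j1 hj1 j2 hj2 heq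
          simp only [coe_Icc, Set.mem_Icc] at hj1 hj2
          by_contra hne
          rcases Nat.lt_or_ge j1 j2 with h | h
          · exact hinj (a + b) j1 j2 h (by omega) heq
          · exact hinj (a + b) j2 j1 (by omega) (by omega) heq.symm
      have := card_le_card hsub
      rw [hc2, hcard] at this
      omega
    -- third: k = l
    have hkl2 : k = l := by
      by_contra hne
      rw [hab] at hend
      rcases Nat.lt_or_ge k l with h | h
      · exact hinj b (k - 1) (l - 1) (by omega) (by omega)
          (by linear_combination hend)
      · exact hinj b (l - 1) (k - 1) (by omega) (by omega)
          (by linear_combination -hend)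
    rw [hA, hB, hab, hkl2]
  · -- backward direction
    intro hAB
    have hkl2 : k = l := by rw [← hAcard, ← hBcard, hAB]
    rw [← hAB, hAcard]
    have hset : restrictedSumset A A
        = (Icc 1 (2 * k - 3)).image (fun j : ℕ => a + a + (j : ZMod n) * d) := by
      ext x
      rw [mem_restrictedSumset]
      constructor
      · rintro ⟨u, hu, v, hv, hne, rfl⟩
        rw [hA] at hu hv
        obtain ⟨s, hs, rfl⟩ := mem_image.mp hu
        obtain ⟨t, ht, rfl⟩ := mem_image.mp hv
        rw [mem_range] at hs ht
        have hst : s ≠ t := by rintro rfl; exact hne rfl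
        refine mem_image.mpr ⟨s + t, mem_Icc.mpr ⟨by omega, by omega⟩, ?_⟩
        push_cast
        ring
      · intro hx
        obtain ⟨j, hj, rfl⟩ := mem_image.mp hx
        rw [mem_Icc] at hj
        rw [hA]
        exact mem_restrictedSumset.mp
          (mid_mem n k k (by omega) (by omega) a a d h2d j hj.1 (by omega))
    rw [hset, card_image_of_injOn, Nat.card_Icc]
    · omega
    · intro j1 hj1 j2 hj2 heq
      simp only [coe_Icc, Set.mem_Icc] at hj1 hj2
      by_contra hne
      rcases Nat.lt_or_ge j1 j2 with h | h
      · exact hinj (a + a) j1 j2 h (by omega) heq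
      · exact hinj (a + a) j2 j1 (by omega) (by omega) heq.symm
end

section
/- Let G be a finite group (multiplicative), p(G) the smallest prime dividing |G|, and let d ∈ G. Let A = {a d^s : 0 ≤ s ≤ k-1} be a right geometric progression and B = {d^t b : 0 ≤ t ≤ l-1} a left geometric progression with the same common ratio d, where k, l ≥ 3 and p(G) > k+l-2. If |A ∙ B| = k+l-3, where A ∙ B = {xy : x ∈ A, y ∈ B, x ≠ y}, then a = b and a d^{k-1} = d^{l-1} b, i.e., A and B share both endpoints. -/
open Finset

/-- The restricted product set `{x * y : x ∈ A, y ∈ B, x ≠ y}`. -/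
def restrictedMul {G : Type*} [Monoid G] [DecidableEq G]
    (A B : Finset G) : Finset G :=
  ((A ×ˢ B).filter fun x => x.1 ≠ x.2).image fun x => x.1 * x.2

/-- In a group of odd order, an element conjugate to its inverse is an involution (hence 1). -/
lemma aux_conj_inv_sq_eq_one {G : Type*} [Group G] [Fintype G]
    (hodd : ¬ 2 ∣ Fintype.card G) (g e : G) (h : g * e * g⁻¹ = e⁻¹) : e ^ 2 = 1 := by
  have h' : g * e⁻¹ * g⁻¹ = e := by
    have := congrArg Inv.inv h
    rw [mul_inv_rev, mul_inv_rev, inv_inv, inv_inv, ← mul_assoc] at this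
    exact this
  have hge : g * e = e⁻¹ * g := mul_inv_eq_iff_eq_mul.mp h
  have hge' : g * e⁻¹ = e * g := mul_inv_eq_iff_eq_mul.mp h'
  have hcomm2 : Commute (g ^ 2) e := by
    show g ^ 2 * e = e * g ^ 2
    calc g ^ 2 * e = g * (g * e) := by rw [pow_two, mul_assoc]
      _ = g * (e⁻¹ * g) := by rw [hge]
      _ = (g * e⁻¹) * g := by rw [mul_assoc]
      _ = e * g * g := by rw [hge']
      _ = e * g ^ 2 := by rw [pow_two, mul_assoc]
  have hdvd : orderOf g ∣ Fintype.card G := orderOf_dvd_card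
  have hno2 : ¬ 2 ∣ orderOf g := fun h2 => hodd (h2.trans hdvd)
  have hoddn : Odd (orderOf g) := Nat.odd_iff.mpr (by omega)
  obtain ⟨m, hm⟩ := hoddn
  have hcg : Commute g e := by
    have := hcomm2.pow_left (m + 1)
    rwa [← pow_mul, show 2 * (m + 1) = orderOf g + 1 by omega, pow_succ,
      pow_orderOf_eq_one, one_mul] at this
  have he : e⁻¹ = e := by
    rw [← h, hcg.eq, mul_assoc, mul_inv_cancel, mul_one]
  rw [pow_two]
  nth_rewrite 2 [← he]
  exact mul_inv_cancel e

theorem inverse_dsh_nonabelian {G : Type*} [Group G] [Fintype G] [DecidableEq G]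
    (a b d : G) (k l : ℕ) (hk : 3 ≤ k) (hl : 3 ≤ l)
    (A B : Finset G)
    (hA : A = (Finset.range k).image (fun s => a * d ^ s))
    (hB : B = (Finset.range l).image (fun t => d ^ t * b))
    (hAcard : A.card = k) (hBcard : B.card = l)
    (hp : k + l - 2 < (Fintype.card G).minFac)
    (h : (restrictedMul A B).card = k + l - 3) :
    a = b ∧ a * d ^ (k - 1) = d ^ (l - 1) * b := by
  have hdpos : 0 < orderOf d := orderOf_pos d
  -- the order of d is at least k
  have hinjA : Set.InjOn (fun s => a * d ^ s) (range k) := by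
    apply Finset.card_image_iff.mp
    rw [← hA, hAcard, card_range]
  have hk_le : k ≤ orderOf d := by
    by_contra hlt
    push_neg at hlt
    have h0 : (0 : ℕ) ∈ (range k : Finset ℕ) := mem_range.mpr (by omega)
    have h1 : orderOf d ∈ (range k : Finset ℕ) := mem_range.mpr hlt
    have := hinjA h0 h1 (by simp [pow_orderOf_eq_one])
    omega
  have hordG : orderOf d ∣ Fintype.card G := orderOf_dvd_card
  have hmin : (Fintype.card G).minFac ≤ orderOf d := Nat.minFac_le_of_dvd (by omega) hordG
  have hord : k + l - 1 ≤ orderOf d := by omega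
  have hodd : ¬ 2 ∣ Fintype.card G := by
    intro h2
    have := Nat.minFac_le_of_dvd le_rfl h2
    omega
  -- key impossibility
  have hkey : ¬ (a = d * a * d) := by
    intro hrel
    have h0 : a * d⁻¹ * a⁻¹ = d := by
      nth_rewrite 1 [hrel]
      group
    have h1 : a * d * a⁻¹ = d⁻¹ := by
      calc a * d * a⁻¹ = (a * d⁻¹ * a⁻¹)⁻¹ := by group
        _ = d⁻¹ := by rw [h0]
    have hsq := aux_conj_inv_sq_eq_one hodd a d h1
    have hdvd2 : orderOf d ∣ 2 := orderOf_dvd_of_pow_eq_one hsq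
    have := Nat.le_of_dvd (by norm_num) hdvd2
    omega
  -- injectivity of powers below the order
  have hpinj : ∀ m1 m2 : ℕ, m1 < orderOf d → m2 < orderOf d → d ^ m1 = d ^ m2 → m1 = m2 := by
    intro m1 m2 h1 h2 he
    have := pow_eq_pow_iff_modEq.mp he
    rwa [Nat.ModEq, Nat.mod_eq_of_lt h1, Nat.mod_eq_of_lt h2] at this
  -- membership criterion
  have hmemR : ∀ s t : ℕ, s < k → t < l → a * d ^ s ≠ d ^ t * b →
      a * d ^ (s + t) * b ∈ restrictedMul A B := by
    intro s t hs ht hne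
    unfold restrictedMul
    rw [Finset.mem_image]
    refine ⟨(a * d ^ s, d ^ t * b), ?_, ?_⟩
    · rw [Finset.mem_filter, Finset.mem_product]
      exact ⟨⟨by rw [hA]; exact Finset.mem_image.mpr ⟨s, mem_range.mpr hs, rfl⟩,
        by rw [hB]; exact Finset.mem_image.mpr ⟨t, mem_range.mpr ht, rfl⟩⟩, hne⟩
    · show (a * d ^ s) * (d ^ t * b) = a * d ^ (s + t) * b
      rw [pow_add]
      simp [mul_assoc]
  -- good representations for middle exponents
  have goodRep : ∀ M : ℕ, 1 ≤ M → M ≤ k + l - 3 →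
      ∃ s t : ℕ, s < k ∧ t < l ∧ s + t = M ∧ a * d ^ s ≠ d ^ t * b := by
    intro M hM1 hM2
    by_cases hMk : M ≤ k - 1
    · obtain ⟨m, rfl⟩ : ∃ m, M = m + 1 := ⟨M - 1, by omega⟩
      by_cases hb : a * d ^ (m + 1) = d ^ 0 * b
      · refine ⟨m, 1, by omega, by omega, by omega, ?_⟩
        intro hbad
        apply hkey
        have hb' : a * d ^ (m + 1) = b := by rw [pow_zero, one_mul] at hb; exact hb
        rw [pow_one, ← hb'] at hbad
        have hc : a * d ^ m = (d * a * d) * d ^ m := by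
          rw [hbad, pow_succ']
          simp [mul_assoc]
        exact mul_right_cancel hc
      · exact ⟨m + 1, 0, by omega, by omega, by omega, hb⟩
    · by_cases hb : a * d ^ (k - 1) = d ^ (M - (k - 1)) * b
      · refine ⟨k - 2, M - (k - 2), by omega, by omega, by omega, ?_⟩
        intro hbad
        apply hkey
        have h1 : M - (k - 2) = (M - (k - 1)) + 1 := by omega
        have h2 : k - 1 = (k - 2) + 1 := by omega
        rw [h1, pow_succ', mul_assoc, ← hb, h2, pow_succ] at hbad
        have hc : a * d ^ (k - 2) = (d * a * d) * d ^ (k - 2) := by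
          rw [hbad]
          rw [show d ^ (k - 2) * d = d * d ^ (k - 2) from (pow_mul_comm' d (k - 2))]
          simp [mul_assoc]
        exact mul_right_cancel hc
      · exact ⟨k - 1, M - (k - 1), by omega, by omega, by omega, hb⟩
  -- the candidate set of middle products
  have hTcard : (((range (k + l - 3)).image (fun m => a * d ^ (m + 1) * b)).card = k + l - 3) := by
    rw [Finset.card_image_of_injOn, card_range]
    intro x hx y hy hxy
    simp only [Finset.coe_range, Set.mem_Iio] at hx hy
    have he : d ^ (x + 1) = d ^ (y + 1) := mul_left_cancel (mul_right_cancel hxy)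
    have := hpinj (x + 1) (y + 1) (by omega) (by omega) he
    omega
  have hTsub : ((range (k + l - 3)).image (fun m => a * d ^ (m + 1) * b)) ⊆ restrictedMul A B := by
    intro x hx
    simp only [Finset.mem_image, mem_range] at hx
    obtain ⟨m, hm, rfl⟩ := hx
    obtain ⟨s, t, hs, ht, hst, hne⟩ := goodRep (m + 1) (by omega) (by omega)
    have := hmemR s t hs ht hne
    rwa [hst] at this
  have hTeq : ((range (k + l - 3)).image (fun m => a * d ^ (m + 1) * b)) = restrictedMul A B :=
    Finset.eq_of_subset_of_card_le hTsub (le_of_eq (h.trans hTcard.symm))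
  constructor
  · by_contra hab
    have hmem : a * d ^ (0 + 0) * b ∈ restrictedMul A B :=
      hmemR 0 0 (by omega) (by omega) (by simpa using hab)
    rw [← hTeq] at hmem
    simp only [Finset.mem_image, mem_range] at hmem
    obtain ⟨m, hm, he⟩ := hmem
    have he2 : d ^ (m + 1) = d ^ (0 + 0) := mul_left_cancel (mul_right_cancel he)
    have := hpinj (m + 1) (0 + 0) (by omega) (by omega) he2
    omega
  · by_contra hend
    have hmem := hmemR (k - 1) (l - 1) (by omega) (by omega) hend
    rw [← hTeq] at hmem
    simp only [Finset.mem_image, mem_range] at hmem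
    obtain ⟨m, hm, he⟩ := hmem
    have he2 : d ^ (m + 1) = d ^ ((k - 1) + (l - 1)) := mul_left_cancel (mul_right_cancel he)
    have := hpinj (m + 1) ((k - 1) + (l - 1)) (by omega) (by omega) he2
    omega
end

section
/- Let G = (Z/47Z × Z/47Z) ⋊_φ Z/23Z where φ: Z/23Z → GL₂(F₄₇) sends x to the diagonal matrix diag(2^x, 1). Let q = ((1,0), 0) and e = ((0,0), 1), and let A = {e·q^k : 0 ≤ k ≤ 4} and B = {q^l·e : 0 ≤ l ≤ 8}. Then |A| = 5, |B| = 9, and |A ∙ B| = 11 = |A|+|B|-3, where A ∙ B = {xy : x ∈ A, y ∈ B, x ≠ y}. -/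
open Finset SemidirectProduct

/-- The unit `2` of `ZMod 47`. -/
def u47 : (ZMod 47)ˣ := ZMod.unitOfCoprime 2 (by decide)

/-- The additive automorphism of `ZMod 47 × ZMod 47` given by the matrix `diag(2^x, 1)`. -/
def psi (x : ZMod 23) : (ZMod 47 × ZMod 47) ≃+ (ZMod 47 × ZMod 47) :=
  AddEquiv.prodCongr (AddAut.mulLeft (u47 ^ x.val)) (AddEquiv.refl _)

lemma u47_pow_23 : u47 ^ 23 = 1 := by decide

lemma psi_apply (x : ZMod 23) (p : ZMod 47 × ZMod 47) :
    psi x p = ((u47 : ZMod 47) ^ x.val * p.1, p.2) := rfl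

lemma psi_add (x y : ZMod 23) : psi (x + y) = (psi x).trans (psi y) := by
  apply AddEquiv.ext
  intro p
  rw [AddEquiv.trans_apply, psi_apply, psi_apply, psi_apply]
  have h1 : (u47 : ZMod 47) ^ 23 = 1 := by
    have := congrArg (Units.val) u47_pow_23
    simpa using this
  have h2 : (u47 : ZMod 47) ^ (x + y).val = (u47 : ZMod 47) ^ (x.val + y.val) := by
    rw [ZMod.val_add, ← pow_eq_pow_mod _ h1]
  simp only [h2, pow_add]
  rw [Prod.mk.injEq]; exact ⟨by ring, rfl⟩

/-- The homomorphism `φ : Z/23Z → Aut(Z/47Z × Z/47Z)`, `x ↦ diag(2^x, 1)`,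
written multiplicatively. -/
def phi : Multiplicative (ZMod 23) →* MulAut (Multiplicative (ZMod 47 × ZMod 47)) :=
  MonoidHom.mk' (fun x => AddEquiv.toMultiplicative (psi x.toAdd)) (by
    intro x y
    apply MulEquiv.ext
    intro p
    show Multiplicative.ofAdd ((psi (x.toAdd + y.toAdd)) p.toAdd)
        = Multiplicative.ofAdd (((psi y.toAdd).trans (psi x.toAdd)) p.toAdd)
    rw [add_comm, psi_add])

/-- The non-nilpotent group `G = (Z/47Z × Z/47Z) ⋊_φ Z/23Z` of order `23 · 47²`. -/
abbrev Gex : Type := Multiplicative (ZMod 47 × ZMod 47) ⋊[phi] Multiplicative (ZMod 23)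

open scoped Classical in
theorem example_critical_pair
    (q : Gex) (hq : q = ⟨Multiplicative.ofAdd ((1 : ZMod 47), (0 : ZMod 47)), 1⟩)
    (e : Gex) (he : e = ⟨1, Multiplicative.ofAdd (1 : ZMod 23)⟩)
    (A B : Finset Gex)
    (hA : A = (Finset.range 5).image (fun k => e * q ^ k))
    (hB : B = (Finset.range 9).image (fun l => q ^ l * e)) :
    A.card = 5 ∧ B.card = 9 ∧
      (((A ×ˢ B).filter fun x => x.1 ≠ x.2).image fun x => x.1 * x.2).card = 11 ∧
      11 = A.card + B.card - 3 := by
  subst hq he hA hB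
  set_option maxRecDepth 10000 in decide
end

section
/- Let G be a group, A, B ⊆ G nonempty, with A = {a q^s : 0 ≤ s ≤ k-1} a right geometric progression and B = {q^t a : 0 ≤ t ≤ l-1} a left geometric progression with the same first element a and common ratio q, satisfying a q^{k-1} = q^{l-1} a. Suppose the order of q exceeds k+l-2 and k, l ≥ 3. Then |A ∙ B| ≤ k+l-3, where A ∙ B = {xy : x ∈ A, y ∈ B, x ≠ y}. -/
open Finset

theorem shared_endpoints_critical {G : Type*} [Group G] [DecidableEq G]
    (a q : G) (k l : ℕ) (hk : 3 ≤ k) (hl : 3 ≤ l)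
    (horder : k + l - 2 < orderOf q)
    (hend : a * q ^ (k - 1) = q ^ (l - 1) * a)
    (A B : Finset G)
    (hA : A = (Finset.range k).image (fun s => a * q ^ s))
    (hB : B = (Finset.range l).image (fun t => q ^ t * a)) :
    (restrictedMul A B).card ≤ k + l - 3 := by
  have hsub : restrictedMul A B ⊆
      (Finset.Icc 1 (k + l - 3)).image (fun r => a * q ^ r * a) := by
    intro z hz
    simp only [restrictedMul, mem_image, mem_filter, mem_product] at hz
    obtain ⟨⟨x, y⟩, ⟨⟨hx, hy⟩, hne⟩, rfl⟩ := hz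
    rw [hA] at hx; rw [hB] at hy
    simp only [mem_image, mem_range] at hx hy
    obtain ⟨s, hs, rfl⟩ := hx
    obtain ⟨t, ht, rfl⟩ := hy
    simp only [ne_eq] at hne
    refine mem_image.2 ⟨s + t, mem_Icc.2 ⟨?_, ?_⟩, ?_⟩
    · by_contra h
      have hs0 : s = 0 := by omega
      have ht0 : t = 0 := by omega
      apply hne; simp [hs0, ht0]
    · by_contra h
      have hs1 : s = k - 1 := by omega
      have ht1 : t = l - 1 := by omega
      apply hne; rw [hs1, ht1, hend]
    · rw [pow_add]; group
  calc (restrictedMul A B).card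
      ≤ ((Finset.Icc 1 (k + l - 3)).image (fun r => a * q ^ r * a)).card :=
        card_le_card hsub
    _ ≤ (Finset.Icc 1 (k + l - 3)).card := card_image_le
    _ ≤ k + l - 3 := by rw [Nat.card_Icc]; omega
end
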